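/- Let W ≤ S_d be a permutation group and χ : W → U(K) a character, with K an integral domain and |W| invertible in K. If E is a projective K-module, then the d-th semi-symmetric power [χ]^d(E) is a projective K-module; and if E is a finitely generated projective K-module, then [χ]^d(E) is a finitely generated projective K-module. -/

import Mathlib

noncomputable section

open scoped TensorProduct

/-- The action of a permutation `σ` of `Fin d` on the `d`-th tensor power
`T^d(E)`, determined by `σ • (x₁ ⊗ ⋯ ⊗ x_d) = x_{σ⁻¹(1)} ⊗ ⋯ ⊗ x_{σ⁻¹(d)}`. -/
def permAct (K : Type*) [CommRing K] (E : Type*) [AddCommGroup E] [Module K E]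
    (d : ℕ) (σ : Equiv.Perm (Fin d)) :
    (⨂[K] (_ : Fin d), E) ≃ₗ[K] ⨂[K] (_ : Fin d), E :=
  PiTensorProduct.reindex K (fun _ : Fin d => E) σ

/-- The submodule `_{χ⁻¹}T^d(E)` of `T^d(E)` generated by the elements
`χ⁻¹(σ) z − σ z` for `σ ∈ W`; the quotient by it is the `d`-th
semi-symmetric power `[χ]^d(E)` of weight `χ`. -/
def chiKer {K : Type*} [CommRing K] (E : Type*) [AddCommGroup E] [Module K E]
    {d : ℕ} (W : Subgroup (Equiv.Perm (Fin d))) (χ : W →* Kˣ) :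
    Submodule K (⨂[K] (_ : Fin d), E) :=
  Submodule.span K {w | ∃ (σ : W) (z : ⨂[K] (_ : Fin d), E),
    w = (((χ σ)⁻¹ : Kˣ) : K) • z - permAct K E d (σ : Equiv.Perm (Fin d)) z}

/-- The `d`-th semi-symmetric power `[χ]^d(E) = T^d(E)/_{χ⁻¹}T^d(E)`
of weight `χ` of the `K`-module `E`. -/
abbrev SemiPow {K : Type*} [CommRing K] (E : Type*) [AddCommGroup E] [Module K E]
    {d : ℕ} (W : Subgroup (Equiv.Perm (Fin d))) (χ : W →* Kˣ) :=
  (⨂[K] (_ : Fin d), E) ⧸ chiKer E W χ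

/-- The decomposable `d-χ`-vector `x₁ χ ⋯ χ x_d`. -/
def semiMk {K : Type*} [CommRing K] {E : Type*} [AddCommGroup E] [Module K E]
    {d : ℕ} (W : Subgroup (Equiv.Perm (Fin d))) (χ : W →* Kˣ)
    (x : Fin d → E) : SemiPow E W χ :=
  Submodule.Quotient.mk (PiTensorProduct.tprod K x)

/-! The relations `χ⁻¹(σ) z - σ z` spanning `_{χ⁻¹}T^d(E)` are, up to units, the relations
`χ(σ) σ z - z` defining the coinvariants of the twisted representation `σ ↦ χ(σ) σ` of `W` on
`T^d(E)`, so `[χ]^d(E)` is a module of coinvariants. When `|W|` is invertible the averaging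
operator kills these relations and is congruent to the identity modulo them, so it induces a
section of the quotient map: `[χ]^d(E)` is a direct summand of `T^d(E)`, which is projective
(resp. finitely generated) together with `E`. -/

namespace Representation

variable {k G V : Type*} [CommRing k] [Group G] [AddCommGroup V] [Module k V]

def twist (ρ : Representation k G V) (χ : G →* kˣ) : Representation k G V where
  toFun g := ((χ g : kˣ) : k) • ρ g
  map_one' := by simp
  map_mul' g h := by rw [map_mul, map_mul, Units.val_mul, smul_mul_smul_comm]

@[simp]
theorem twist_apply (ρ : Representation k G V) (χ : G →* kˣ) (g : G) (x : V) :
    ρ.twist χ g x = ((χ g : kˣ) : k) • ρ g x :=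
  rfl

variable (ρ : Representation k G V) [Fintype G] [Invertible (Fintype.card G : k)]

theorem averageMap_eq_smul_sum (x : V) :
    averageMap ρ x = ⅟(Fintype.card G : k) • ∑ g : G, ρ g x := by
  simp [averageMap, GroupAlgebra.average]

theorem averageMap_comp (g : G) : averageMap ρ ∘ₗ ρ g = averageMap ρ := by
  rw [averageMap, ← asAlgebraHom_single_one, ← Module.End.mul_eq_comp, ← map_mul,
    GroupAlgebra.mul_average_right]

theorem sub_averageMap_mem_coinvariantsKer (x : V) :
    x - averageMap ρ x ∈ Coinvariants.ker ρ := by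
  have hx : x - averageMap ρ x = ⅟(Fintype.card G : k) • ∑ g : G, (x - ρ g x) := by
    rw [averageMap_eq_smul_sum, Finset.sum_sub_distrib, smul_sub, Finset.sum_const,
      Finset.card_univ, ← Nat.cast_smul_eq_nsmul k, smul_smul, invOf_mul_self, one_smul]
  rw [hx]
  refine Submodule.smul_mem _ _ (Submodule.sum_mem _ fun g _ => ?_)
  rw [← neg_sub]
  exact Submodule.neg_mem _ (Coinvariants.sub_mem_ker g x)

namespace Coinvariants

def averageLift : Coinvariants ρ →ₗ[k] V :=
  lift ρ (averageMap ρ) (averageMap_comp ρ)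

theorem mk_comp_averageLift : mk ρ ∘ₗ averageLift ρ = LinearMap.id :=
  hom_ext <| LinearMap.ext fun x => (mk_eq_iff ρ).2 <| by
    show averageMap ρ x - x ∈ ker ρ
    rw [← neg_sub]
    exact Submodule.neg_mem _ (sub_averageMap_mem_coinvariantsKer ρ x)

instance projective [Module.Projective k V] : Module.Projective k (Coinvariants ρ) :=
  Module.Projective.of_split (averageLift ρ) (mk ρ) (mk_comp_averageLift ρ)

end Coinvariants

end Representation

instance Module.Projective.piTensorProduct_fin {R E : Type*} [CommRing R] [AddCommGroup E]
    [Module R E] [Module.Projective R E] (n : ℕ) : Module.Projective R (⨂[R] (_ : Fin n), E) := by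
  induction n with
  | zero => exact .of_equiv (PiTensorProduct.isEmptyEquiv (Fin 0)).symm
  | succ n ih =>
    exact .of_equiv <|
      (LinearEquiv.lTensor _ (PiTensorProduct.subsingletonEquiv (0 : Fin 1)).symm).trans <|
        (PiTensorProduct.tmulEquiv R E).trans <|
          PiTensorProduct.reindex R (fun _ => E) finSumFinEquiv

section SemiPow

variable (K : Type*) [CommRing K] (E : Type*) [AddCommGroup E] [Module K E] (d : ℕ)

def permRep : Representation K (Equiv.Perm (Fin d)) (⨂[K] (_ : Fin d), E) where
  toFun σ := (permAct K E d σ).toLinearMap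
  map_one' := by rw [permAct, Equiv.Perm.one_def, PiTensorProduct.reindex_refl]; rfl
  map_mul' σ τ := by rw [Equiv.Perm.mul_def, permAct, ← PiTensorProduct.reindex_trans]; rfl

variable {K d} (W : Subgroup (Equiv.Perm (Fin d))) (χ : W →* Kˣ)

def semiPowRep : Representation K W (⨂[K] (_ : Fin d), E) :=
  Representation.twist ((permRep K E d).comp W.subtype) χ

theorem chiKer_eq_coinvariantsKer :
    chiKer E W χ = Representation.Coinvariants.ker (semiPowRep E W χ) := by
  refine le_antisymm (Submodule.span_le.2 ?_) (Submodule.span_le.2 ?_)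
  · rintro _ ⟨σ, z, rfl⟩
    rw [SetLike.mem_coe, ← Submodule.neg_mem_iff]
    refine Representation.Coinvariants.mem_ker_of_eq σ ((((χ σ)⁻¹ : Kˣ) : K) • z) _ ?_
    simp [semiPowRep, permRep, smul_smul]
  · rintro _ ⟨⟨σ, z⟩, rfl⟩
    have h : semiPowRep E W χ σ z - z
        = -((χ σ : Kˣ) : K) • ((((χ σ)⁻¹ : Kˣ) : K) • z - permAct K E d σ z) := by
      simp [semiPowRep, permRep, smul_sub, smul_smul]
      abel
    change semiPowRep E W χ σ z - z ∈ chiKer E W χ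
    rw [h]
    exact Submodule.smul_mem _ _ (Submodule.subset_span ⟨σ, z, rfl⟩)

def semiPowEquivCoinvariants :
    SemiPow E W χ ≃ₗ[K] (semiPowRep E W χ).Coinvariants :=
  Submodule.quotEquivOfEq _ _ (chiKer_eq_coinvariantsKer E W χ)

end SemiPow

theorem semiPow_projective_general {K : Type*} [CommRing K]
    {E : Type*} [AddCommGroup E] [Module K E]
    {d : ℕ} (W : Subgroup (Equiv.Perm (Fin d))) (χ : W →* Kˣ)
    (hcard : IsUnit ((Nat.card W : K))) :
    (Module.Projective K E → Module.Projective K (SemiPow E W χ)) ∧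
    (Module.Projective K E → Module.Finite K E →
      Module.Projective K (SemiPow E W χ) ∧ Module.Finite K (SemiPow E W χ)) := by
  have : Fintype W := Fintype.ofFinite W
  have : Invertible (Fintype.card W : K) := (Nat.card_eq_fintype_card (α := W) ▸ hcard).invertible
  have projective (hE : Module.Projective K E) : Module.Projective K (SemiPow E W χ) :=
    Module.Projective.of_equiv (semiPowEquivCoinvariants E W χ).symm
  exact ⟨projective, fun hE _ => ⟨projective hE, inferInstance⟩⟩

/-- Corollary II.8. Let `W ≤ S_d` with `|W| ∈ U(K)` and `K`
an integral domain. If `E` is projective then `[χ]^d(E)` is projective, and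
if `E` is finitely generated projective then so is `[χ]^d(E)`. -/
theorem semiPow_projective {K : Type*} [CommRing K] [IsDomain K]
    {E : Type*} [AddCommGroup E] [Module K E]
    {d : ℕ} (W : Subgroup (Equiv.Perm (Fin d))) (χ : W →* Kˣ)
    (hcard : IsUnit ((Nat.card W : K))) :
    (Module.Projective K E → Module.Projective K (SemiPow E W χ)) ∧
    (Module.Projective K E → Module.Finite K E →
      Module.Projective K (SemiPow E W χ) ∧ Module.Finite K (SemiPow E W χ)) :=
  semiPow_projective_general W χ hcard
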